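/- arXiv:1601.05033 — 5 statements merged into one kernel-verified Lean document; each statement's English description precedes it below -/
import Mathlib

section
/- Under the standard assumptions, for every joining λ ∈ J(S:ν) and every n ≥ 1, ∫ c dλ ≥ (1/n) ∫_Y G_n(y) dν(y), where G_n(y) = inf_{x ∈ X} Σ_{i=0}^{n−1} c(Sⁱx, Tⁱy). Consequently C(S:ν) ≥ sup_n (1/n) ∫ G_n dν. -/
open MeasureTheory Finset

/-!
Write `Φₙ = ∑_{i<n} c ∘ (S × T)^i` for the Birkhoff sum of `c`. Since `Φₙ(x, y) ≥ Gₙ(y)` for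
every `x`, integrating against an `S × T`-invariant `λ` with `Y`-marginal `ν` gives
`n ∫ c dλ = ∫ Φₙ dλ ≥ ∫ Gₙ ∘ snd dλ = ∫ Gₙ dν`. That `Gₙ` is measurable at all comes from
compactness of `X`: an infimum over a compact factor of a lower semicontinuous function is lower
semicontinuous. The bound on `C(S:ν)` also needs the set of joinings to be nonempty; it contains
`μ × ν` for any `S`-invariant probability `μ`, which exists by Krylov–Bogoliubov: a weak limit
point of the empirical measures along an orbit is invariant, since shifting the orbit by one
step changes the averages by `O(1/n)`.
-/

open Filter Topology
open scoped ENNReal BoundedContinuousFunction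

theorem abs_ciInf_le_of_forall_abs_le {ι : Type*} [Nonempty ι] {f : ι → ℝ} {C : ℝ}
    (h : ∀ i, |f i| ≤ C) : |⨅ i, f i| ≤ C := by
  obtain ⟨i₀⟩ := ‹Nonempty ι›
  have hbdd : BddBelow (Set.range f) := ⟨-C, Set.forall_mem_range.2 fun i => (abs_le.1 (h i)).1⟩
  exact abs_le.2
    ⟨le_ciInf fun i => (abs_le.1 (h i)).1, (ciInf_le hbdd i₀).trans (abs_le.1 (h i₀)).2⟩

theorem LowerSemicontinuous.iInf_left_of_compactSpace {X Z γ : Type*} [TopologicalSpace X]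
    [CompactSpace X] [Nonempty X] [TopologicalSpace Z] [ConditionallyCompleteLinearOrder γ]
    {f : X × Z → γ} (hf : LowerSemicontinuous f) :
    LowerSemicontinuous fun z => ⨅ x, f (x, z) := by
  -- Each infimum is attained, so the sublevel sets are projections of those of `f`.
  refine lowerSemicontinuous_iff_isClosed_preimage.2 fun t => ?_
  convert isClosedMap_snd_of_compactSpace _ (hf.isClosed_preimage t)
  ext z
  obtain ⟨x₀, -, hx₀⟩ := ((hf.comp (Continuous.prodMk_left z)).lowerSemicontinuousOn
    Set.univ).exists_isMinOn Set.univ_nonempty isCompact_univ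
  replace hx₀ : ∀ x, f (x₀, z) ≤ f (x, z) := isMinOn_univ_iff.1 hx₀
  have hmin : ⨅ x, f (x, z) = f (x₀, z) :=
    le_antisymm (ciInf_le ⟨_, Set.forall_mem_range.2 hx₀⟩ x₀) (le_ciInf hx₀)
  simp only [Set.mem_preimage, Set.mem_Iic, Set.mem_image, Prod.exists, exists_eq_right, hmin]
  exact ⟨fun h => ⟨x₀, h⟩, fun ⟨x, hx⟩ => (hx₀ x).trans hx⟩

noncomputable def orbitMeasure {α : Type*} [MeasurableSpace α] (f : α → α) (x : α) (n : ℕ) :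
    Measure α :=
  (n : ℝ≥0∞)⁻¹ • ∑ k ∈ range n, Measure.dirac (f^[k] x)

section orbitMeasure

variable {α : Type*} [MeasurableSpace α] (f : α → α) (x : α) {n : ℕ}

theorem isProbabilityMeasure_orbitMeasure (hn : n ≠ 0) :
    IsProbabilityMeasure (orbitMeasure f x n) := by
  constructor
  simp [orbitMeasure, ENNReal.inv_mul_cancel (Nat.cast_ne_zero.2 hn) (ENNReal.natCast_ne_top n)]

theorem integral_orbitMeasure [TopologicalSpace α] [OpensMeasurableSpace α] (g : α →ᵇ ℝ) :
    ∫ y, g y ∂orbitMeasure f x n = birkhoffAverage ℝ f g n x := by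
  rw [orbitMeasure, integral_smul_measure, integral_finsetSum_measure
    fun k _ => g.integrable _]
  simp [birkhoffAverage, birkhoffSum, integral_dirac' _ _ g.continuous.stronglyMeasurable]

end orbitMeasure

theorem exists_isProbabilityMeasure_map_eq_self {X : Type*} [MetricSpace X] [CompactSpace X]
    [Nonempty X] [MeasurableSpace X] [BorelSpace X] {S : X → X} (hS : Continuous S) :
    ∃ μ : Measure X, IsProbabilityMeasure μ ∧ μ.map S = μ := by
  obtain ⟨x₀⟩ := ‹Nonempty X›
  let P : ℕ → ProbabilityMeasure X := fun n =>
    ⟨orbitMeasure S x₀ (n + 1), isProbabilityMeasure_orbitMeasure S x₀ n.succ_ne_zero⟩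
  obtain ⟨μ, φ, hφ, hlim⟩ := CompactSpace.tendsto_subseq P
  refine ⟨μ, inferInstance, ext_of_forall_integral_eq_of_IsFiniteMeasure fun g => ?_⟩
  rw [integral_map hS.measurable.aemeasurable g.continuous.aestronglyMeasurable]
  have hP := ProbabilityMeasure.tendsto_iff_forall_integral_tendsto.1 hlim
  refine tendsto_nhds_unique (hP (g.compContinuous ⟨S, hS⟩)) ?_
  have hshift : Tendsto (fun n => birkhoffAverage ℝ S g n (S x₀) - birkhoffAverage ℝ S g n x₀)
      atTop (𝓝 0) :=
    tendsto_birkhoffAverage_apply_sub_birkhoffAverage' ℝ g.isBounded_range S x₀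
  have hlim_shift := (hP g).add (((tendsto_add_atTop_iff_nat 1).2 hshift).comp hφ.tendsto_atTop)
  rw [add_zero] at hlim_shift
  refine hlim_shift.congr fun k => ?_
  change ∫ y, g y ∂orbitMeasure S x₀ (φ k + 1) + _ =
    ∫ y, g.compContinuous ⟨S, hS⟩ y ∂orbitMeasure S x₀ (φ k + 1)
  rw [integral_orbitMeasure, integral_orbitMeasure, Function.comp_apply, add_sub_cancel]
  simp [birkhoffAverage, birkhoffSum, ← Function.iterate_succ_apply' S]

namespace MeasureTheory.MeasurePreserving

variable {α β E : Type*} [MeasurableSpace α] [MeasurableSpace β] [NormedAddCommGroup E]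
  {μ : Measure α} {f : α → α} {g : α → E}

theorem integral_comp_of_aestronglyMeasurable [NormedSpace ℝ E] {ν : Measure β} {φ : α → β}
    (hφ : MeasurePreserving φ μ ν) {h : β → E} (hh : AEStronglyMeasurable h ν) :
    ∫ x, h (φ x) ∂μ = ∫ y, h y ∂ν := by
  rw [← integral_map hφ.aemeasurable (hφ.map_eq.symm ▸ hh), hφ.map_eq]

theorem integrable_birkhoffSum (hf : MeasurePreserving f μ μ) (hg : Integrable g μ) (n : ℕ) :
    Integrable (birkhoffSum f g n) μ :=
  integrable_finsetSum _ fun k _ => (hf.iterate k).integrable_comp_of_integrable hg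

theorem integral_birkhoffSum [NormedSpace ℝ E] (hf : MeasurePreserving f μ μ)
    (hg : Integrable g μ) (n : ℕ) : ∫ x, birkhoffSum f g n x ∂μ = n • ∫ x, g x ∂μ := by
  simp only [birkhoffSum]
  rw [integral_finsetSum _ fun k _ => ?_]
  · simp [(hf.iterate _).integral_comp_of_aestronglyMeasurable hg.aestronglyMeasurable]
  · exact (hf.iterate k).integrable_comp_of_integrable hg

end MeasureTheory.MeasurePreserving

theorem integral_le_mul_integral_of_comp_le_birkhoffSum {Z Y : Type*} [MeasurableSpace Z]
    [MeasurableSpace Y] {lam : Measure Z} {ν : Measure Y} {F : Z → Z}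
    (hF : MeasurePreserving F lam lam) {π : Z → Y} (hπ : MeasurePreserving π lam ν)
    {c : Z → ℝ} (hc : Integrable c lam) {G : Y → ℝ} (hG : Integrable G ν) {n : ℕ}
    (hle : ∀ z, G (π z) ≤ birkhoffSum F c n z) :
    ∫ y, G y ∂ν ≤ n * ∫ z, c z ∂lam := calc
  ∫ y, G y ∂ν = ∫ z, G (π z) ∂lam := by
    rw [hπ.integral_comp_of_aestronglyMeasurable hG.aestronglyMeasurable]
  _ ≤ ∫ z, birkhoffSum F c n z ∂lam :=
    integral_mono (hπ.integrable_comp_of_integrable hG) (hF.integrable_birkhoffSum hc n) hle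
  _ = n * ∫ z, c z ∂lam := by rw [hF.integral_birkhoffSum hc, nsmul_eq_mul]

section ProdMap

variable {X Y : Type*} {S : X → X} {T : Y → Y} {c : X × Y → ℝ} {cstar : Y → ℝ}

theorem birkhoffSum_prodMap_apply (S : X → X) (T : Y → Y) (c : X × Y → ℝ) (n : ℕ) (x : X)
    (y : Y) : birkhoffSum (Prod.map S T) c n (x, y) = ∑ i ∈ range n, c (S^[i] x, T^[i] y) := by
  simp [birkhoffSum, Prod.map_iterate]

theorem abs_birkhoffSum_prodMap_le (hbound : ∀ x y, |c (x, y)| ≤ cstar y) (n : ℕ) (x : X)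
    (y : Y) : |birkhoffSum (Prod.map S T) c n (x, y)| ≤ birkhoffSum T cstar n y := by
  rw [birkhoffSum_prodMap_apply]
  exact (abs_sum_le_sum_abs _ _).trans (sum_le_sum fun i _ => hbound _ _)

theorem iInf_birkhoffSum_prodMap_le (hbound : ∀ x y, |c (x, y)| ≤ cstar y) (n : ℕ)
    (p : X × Y) :
    ⨅ x, birkhoffSum (Prod.map S T) c n (x, p.2) ≤ birkhoffSum (Prod.map S T) c n p :=
  ciInf_le ⟨-birkhoffSum T cstar n p.2, Set.forall_mem_range.2 fun x =>
    neg_le_of_abs_le (abs_birkhoffSum_prodMap_le hbound n x p.2)⟩ p.1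

variable [TopologicalSpace X] [CompactSpace X] [Nonempty X] [TopologicalSpace Y]
  [SecondCountableTopology Y] [MeasurableSpace Y] [OpensMeasurableSpace Y]

theorem measurable_iInf_birkhoffSum_prodMap
    (hS : Continuous S) (hT : Measurable T) (hc : LowerSemicontinuous c) (n : ℕ) :
    Measurable fun y => ⨅ x, birkhoffSum (Prod.map S T) c n (x, y) := by
  -- `T` is only measurable, so semicontinuity is used in the orbit coordinates `(T^[i] y)ᵢ`.
  have horbit : Measurable fun y (i : ℕ) => T^[i] y := measurable_pi_lambda _ (hT.iterate ·)
  have hlsc :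
      LowerSemicontinuous fun q : X × (ℕ → Y) => ∑ i ∈ range n, c (S^[i] q.1, q.2 i) :=
    lowerSemicontinuous_sum fun i _ => hc.comp
      (((hS.iterate i).comp continuous_fst).prodMk ((continuous_apply i).comp continuous_snd))
  simp only [birkhoffSum_prodMap_apply]
  exact hlsc.iInf_left_of_compactSpace.measurable.comp horbit

theorem integrable_iInf_birkhoffSum_prodMap {ν : Measure Y} (hS : Continuous S)
    (hTν : MeasurePreserving T ν ν) (hc : LowerSemicontinuous c) (hcstar : Integrable cstar ν)
    (hbound : ∀ x y, |c (x, y)| ≤ cstar y) (n : ℕ) :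
    Integrable (fun y => ⨅ x, birkhoffSum (Prod.map S T) c n (x, y)) ν :=
  (hTν.integrable_birkhoffSum hcstar n).mono'
    (measurable_iInf_birkhoffSum_prodMap hS hTν.measurable hc n).aestronglyMeasurable
    (ae_of_all _ fun y =>
      abs_ciInf_le_of_forall_abs_le fun x => abs_birkhoffSum_prodMap_le hbound n x y)

end ProdMap

/-- For every joining `λ ∈ J(S:ν)` and `n ≥ 1`,
`∫ c dλ ≥ (1/n) ∫ G_n dν`; consequently
`C(S:ν) ≥ sup_n (1/n) ∫ G_n dν`. -/
theorem cost_ge_Gn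
    {X Y : Type*}
    [MetricSpace X] [CompactSpace X] [Nonempty X]
    [MeasurableSpace X] [BorelSpace X]
    [TopologicalSpace Y] [PolishSpace Y] [MeasurableSpace Y] [BorelSpace Y]
    (S : X → X) (hS : Continuous S)
    (T : Y → Y) (hT : Measurable T)
    (ν : Measure Y) [IsProbabilityMeasure ν] (hν : Ergodic T ν)
    (c : X × Y → ℝ) (hc : LowerSemicontinuous c)
    (cstar : Y → ℝ) (hcstar : Integrable cstar ν)
    (hbound : ∀ x y, |c (x, y)| ≤ cstar y)
    (G : ℕ → Y → ℝ)
    (hG : ∀ n y, G n y = ⨅ x : X, ∑ i ∈ Finset.range n, c (S^[i] x, T^[i] y)) :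
    (∀ lam : Measure (X × Y), IsProbabilityMeasure lam →
        lam.map (Prod.map S T) = lam → lam.map Prod.snd = ν →
        ∀ n : ℕ, 1 ≤ n →
          ∫ p, c p ∂lam ≥ (1 / (n : ℝ)) * ∫ y, G n y ∂ν) ∧
    (∀ n : ℕ, 1 ≤ n →
      sInf {r : ℝ | ∃ lam : Measure (X × Y), IsProbabilityMeasure lam ∧
          lam.map (Prod.map S T) = lam ∧ lam.map Prod.snd = ν ∧
          ∫ p, c p ∂lam = r}
        ≥ (1 / (n : ℝ)) * ∫ y, G n y ∂ν) := by
  have hTν : MeasurePreserving T ν ν := hν.toMeasurePreserving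
  have hG' : G = fun n y => ⨅ x, birkhoffSum (Prod.map S T) c n (x, y) := by
    ext n y; simp only [hG, birkhoffSum_prodMap_apply]
  have joining_bound : ∀ lam : Measure (X × Y), IsProbabilityMeasure lam →
      lam.map (Prod.map S T) = lam → lam.map Prod.snd = ν →
      ∀ n : ℕ, 1 ≤ n → ∫ p, c p ∂lam ≥ (1 / (n : ℝ)) * ∫ y, G n y ∂ν := by
    intro lam _ hinv hsnd n hn
    have hπ : MeasurePreserving Prod.snd lam ν := ⟨measurable_snd, hsnd⟩
    have hc_int : Integrable c lam := (hπ.integrable_comp_of_integrable hcstar).mono'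
      hc.measurable.aestronglyMeasurable (ae_of_all _ fun p => hbound p.1 p.2)
    have key := integral_le_mul_integral_of_comp_le_birkhoffSum
      ⟨hS.measurable.prodMap hT, hinv⟩ hπ hc_int
      (integrable_iInf_birkhoffSum_prodMap hS hTν hc hcstar hbound n)
      (iInf_birkhoffSum_prodMap_le hbound n)
    rw [hG', ge_iff_le, one_div, inv_mul_le_iff₀ (by positivity)]
    exact key
  refine ⟨joining_bound, fun n hn => ?_⟩
  obtain ⟨μ, _, hμ⟩ := exists_isProbabilityMeasure_map_eq_self hS
  refine le_csInf ⟨_, μ.prod ν, inferInstance, ?_, ?_, rfl⟩ ?_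
  · rw [← Measure.map_prod_map _ _ hS.measurable hT, hμ, hTν.map_eq]
  · simp [Measure.map_snd_prod]
  · rintro r ⟨lam, h1, h2, h3, rfl⟩
    exact joining_bound lam h1 h2 h3 n hn
end

section
/- Under the standard assumptions, a joining λ ∈ J_min(S:ν) is an extreme point of the convex set J_min(S:ν) if and only if λ is ergodic with respect to S × T. -/
/-!
A convex decomposition `λ = t λ₁ + (1 - t) λ₂` of an optimal joining into invariant probability
measures has `λᵢ ≪ λ`, so the `Y`-marginal of each `λᵢ` is a `T`-invariant measure absolutely
continuous with respect to the ergodic measure `ν`, hence equal to `ν`. Thus both `λᵢ` are joinings,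
their costs are at least the minimum `C` and average to `C`, so both are optimal: `J_min(S:ν)` is a
face of the set of `S × T`-invariant probability measures. The extreme points of a face are the
extreme points of the ambient set lying in it, and the extreme invariant probability measures are
exactly the ergodic ones.
-/

open MeasureTheory Measure Set Function
open scoped ENNReal

theorem ENNReal.mem_openSegment_iff {E : Type*} [AddCommMonoid E] [Module ℝ≥0∞ E] {x y z : E} :
    z ∈ openSegment ℝ≥0∞ x y ↔ ∃ t : ℝ≥0∞, 0 < t ∧ t < 1 ∧ t • x + (1 - t) • y = z := by
  constructor
  · rintro ⟨a, b, ha, hb, hab, rfl⟩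
    have ha_ne : a ≠ ∞ := ne_top_of_le_ne_top one_ne_top (hab ▸ le_self_add)
    have hb_eq : b = 1 - a := (ENNReal.sub_eq_of_eq_add ha_ne (by rw [← hab, add_comm])).symm
    refine ⟨a, ha, ?_, by rw [hb_eq]⟩
    rw [← hab]
    exact ENNReal.lt_add_right ha_ne hb.ne'
  · rintro ⟨t, ht₀, ht₁, rfl⟩
    exact ⟨t, 1 - t, ht₀, tsub_pos_of_lt ht₁, add_tsub_cancel_of_le ht₁.le, rfl⟩

theorem ENNReal.mem_extremePoints_iff {E : Type*} [AddCommMonoid E] [Module ℝ≥0∞ E] {A : Set E}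
    {x : E} (hx : x ∈ A) :
    x ∈ A.extremePoints ℝ≥0∞ ↔ ∀ x₁ ∈ A, ∀ x₂ ∈ A, ∀ t : ℝ≥0∞, 0 < t → t < 1 →
      x = t • x₁ + (1 - t) • x₂ → x₁ = x ∧ x₂ = x := by
  simp only [mem_extremePoints, ENNReal.mem_openSegment_iff, hx, true_and]
  refine forall₄_congr fun x₁ _ x₂ _ => ⟨?_, ?_⟩
  · rintro h t ht₀ ht₁ rfl
    exact h ⟨t, ht₀, ht₁, rfl⟩
  · rintro h ⟨t, ht₀, ht₁, rfl⟩
    exact h t ht₀ ht₁ rfl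

theorem MeasureTheory.Measure.absolutelyContinuous_of_mem_openSegment {α : Type*}
    [MeasurableSpace α] {μ μ₁ μ₂ : Measure α} (h : μ ∈ openSegment ℝ≥0∞ μ₁ μ₂) : μ₁ ≪ μ := by
  obtain ⟨a, b, ha, -, -, rfl⟩ := h
  exact (absolutelyContinuous_smul ha.ne').add_right _

theorem Ergodic.map_eq_of_semiconj_of_absolutelyContinuous {α β : Type*} [MeasurableSpace α]
    [MeasurableSpace β] {f : α → α} {g : β → β} {π : α → β} {μ ρ : Measure α} {ν : Measure β}
    [IsProbabilityMeasure μ] [IsProbabilityMeasure ν] (hν : Ergodic g ν) (hπ : Measurable π)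
    (hfg : Semiconj π f g) (hμ : MeasurePreserving f μ μ) (hμρ : μ ≪ ρ) (hρ : ρ.map π = ν) :
    μ.map π = ν := by
  have : IsProbabilityMeasure (μ.map π) := isProbabilityMeasure_map hπ.aemeasurable
  refine hν.eq_of_absolutelyContinuous ⟨hν.measurable, ?_⟩ (hρ ▸ hμρ.map hπ)
  rw [map_map hν.measurable hπ, ← hfg.comp_eq, ← map_map hπ hμ.measurable, hμ.map_eq]

section OptimalJoinings

variable {X Y : Type*} [MeasurableSpace X] [MeasurableSpace Y]

noncomputable def minimalCost (S : X → X) (T : Y → Y) (ν : Measure Y) (c : X × Y → ℝ) : ℝ :=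
  sInf {r : ℝ | ∃ lam : Measure (X × Y), IsProbabilityMeasure lam ∧
    lam.map (Prod.map S T) = lam ∧ lam.map Prod.snd = ν ∧ ∫ p, c p ∂lam = r}

/-- `J_min(S:ν)`. -/
def optimalJoinings (S : X → X) (T : Y → Y) (ν : Measure Y) (c : X × Y → ℝ) :
    Set (Measure (X × Y)) :=
  {lam | IsProbabilityMeasure lam ∧ lam.map (Prod.map S T) = lam ∧ lam.map Prod.snd = ν ∧
    ∫ p, c p ∂lam = minimalCost S T ν c}

variable {S : X → X} {T : Y → Y} {ν : Measure Y} {c : X × Y → ℝ} {cstar : Y → ℝ}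
  {μ : Measure (X × Y)}

theorem integrable_of_map_snd_eq (hc : Measurable c) (hcstar : Integrable cstar ν)
    (hbound : ∀ x y, |c (x, y)| ≤ cstar y) (hμ : μ.map Prod.snd = ν) : Integrable c μ :=
  ((hμ ▸ hcstar).comp_measurable measurable_snd).mono' hc.aestronglyMeasurable
    (ae_of_all _ fun p => (Real.norm_eq_abs _).trans_le (hbound p.1 p.2))

theorem neg_integral_le_integral_of_map_snd_eq (hc : Measurable c) (hcstar : Integrable cstar ν)
    (hbound : ∀ x y, |c (x, y)| ≤ cstar y) (hμ : μ.map Prod.snd = ν) :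
    -∫ y, cstar y ∂ν ≤ ∫ p, c p ∂μ := by
  have hcstar_snd : Integrable (fun p : X × Y => cstar p.2) μ :=
    (hμ ▸ hcstar).comp_measurable measurable_snd
  calc -∫ y, cstar y ∂ν = ∫ p, -cstar p.2 ∂μ := by
        rw [integral_neg, ← hμ, integral_map measurable_snd.aemeasurable
          (hμ ▸ hcstar.aestronglyMeasurable)]
    _ ≤ ∫ p, c p ∂μ := integral_mono hcstar_snd.neg
        (integrable_of_map_snd_eq hc hcstar hbound hμ) fun p => neg_le_of_abs_le (hbound p.1 p.2)

theorem minimalCost_le_integral (hc : Measurable c) (hcstar : Integrable cstar ν)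
    (hbound : ∀ x y, |c (x, y)| ≤ cstar y) [IsProbabilityMeasure μ]
    (hμ : μ.map (Prod.map S T) = μ) (hμν : μ.map Prod.snd = ν) :
    minimalCost S T ν c ≤ ∫ p, c p ∂μ := by
  refine csInf_le ⟨-∫ y, cstar y ∂ν, ?_⟩ ⟨μ, inferInstance, hμ, hμν, rfl⟩
  rintro r ⟨μ', -, -, hμ'ν, rfl⟩
  exact neg_integral_le_integral_of_map_snd_eq hc hcstar hbound hμ'ν

theorem isExtreme_optimalJoinings (hS : Measurable S) [IsProbabilityMeasure ν] (hν : Ergodic T ν)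
    (hc : Measurable c) (hcstar : Integrable cstar ν) (hbound : ∀ x y, |c (x, y)| ≤ cstar y) :
    IsExtreme ℝ≥0∞ {μ | MeasurePreserving (Prod.map S T) μ μ ∧ IsProbabilityMeasure μ}
      (optimalJoinings S T ν c) := by
  refine ⟨fun μ hμ => ⟨⟨hS.prodMap hν.measurable, hμ.2.1⟩, hμ.1⟩, ?_⟩
  rintro μ₁ ⟨hμ₁, hP₁⟩ μ₂ ⟨hμ₂, hP₂⟩ μ ⟨-, -, hμν, hμc⟩ hseg
  have hsnd : Semiconj Prod.snd (Prod.map S T) T := fun _ => rfl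
  have hμ₁ν : μ₁.map Prod.snd = ν := hν.map_eq_of_semiconj_of_absolutelyContinuous measurable_snd
    hsnd hμ₁ (absolutelyContinuous_of_mem_openSegment hseg) hμν
  have hμ₂ν : μ₂.map Prod.snd = ν := hν.map_eq_of_semiconj_of_absolutelyContinuous measurable_snd
    hsnd hμ₂ (absolutelyContinuous_of_mem_openSegment (openSegment_symm ℝ≥0∞ μ₁ μ₂ ▸ hseg)) hμν
  have hC₁ := minimalCost_le_integral hc hcstar hbound hμ₁.map_eq hμ₁ν
  have hC₂ := minimalCost_le_integral hc hcstar hbound hμ₂.map_eq hμ₂ν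
  refine ⟨hP₁, hμ₁.map_eq, hμ₁ν, le_antisymm ?_ hC₁⟩
  obtain ⟨a, b, ha, hb, hab, rfl⟩ := hseg
  have ha_ne : a ≠ ∞ := ne_top_of_le_ne_top ENNReal.one_ne_top (hab ▸ le_self_add)
  have hb_ne : b ≠ ∞ := ne_top_of_le_ne_top ENNReal.one_ne_top (hab ▸ le_add_self)
  have ha' : 0 < a.toReal := ENNReal.toReal_pos ha.ne' ha_ne
  have hb' : b.toReal = 1 - a.toReal := by
    rw [← ENNReal.toReal_one, ← hab, ENNReal.toReal_add ha_ne hb_ne, add_sub_cancel_left]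
  rw [integral_add_measure ((integrable_of_map_snd_eq hc hcstar hbound hμ₁ν).smul_measure ha_ne)
    ((integrable_of_map_snd_eq hc hcstar hbound hμ₂ν).smul_measure hb_ne), integral_smul_measure,
    integral_smul_measure, smul_eq_mul, smul_eq_mul, hb'] at hμc
  nlinarith [mul_le_mul_of_nonneg_left hC₂ (hb' ▸ ENNReal.toReal_nonneg)]

end OptimalJoinings

theorem Jmin_extreme_iff_ergodic_general
    {X Y : Type*}
    [MetricSpace X]
    [MeasurableSpace X] [BorelSpace X]
    [TopologicalSpace Y] [PolishSpace Y] [MeasurableSpace Y] [BorelSpace Y]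
    (S : X → X) (hS : Continuous S)
    (T : Y → Y)
    (ν : Measure Y) [IsProbabilityMeasure ν] (hν : Ergodic T ν)
    (c : X × Y → ℝ) (hc : LowerSemicontinuous c)
    (cstar : Y → ℝ) (hcstar : Integrable cstar ν)
    (hbound : ∀ x y, |c (x, y)| ≤ cstar y)
    (C : ℝ)
    (hC : C = sInf {r : ℝ | ∃ lam : Measure (X × Y), IsProbabilityMeasure lam ∧
        lam.map (Prod.map S T) = lam ∧ lam.map Prod.snd = ν ∧
        ∫ p, c p ∂lam = r})
    (Jmin : Set (Measure (X × Y)))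
    (hJmin : Jmin = {lam : Measure (X × Y) | IsProbabilityMeasure lam ∧
        lam.map (Prod.map S T) = lam ∧ lam.map Prod.snd = ν ∧
        ∫ p, c p ∂lam = C})
    (lam : Measure (X × Y)) (hlam : lam ∈ Jmin) :
    (∀ lam₁ ∈ Jmin, ∀ lam₂ ∈ Jmin, ∀ t : ℝ≥0∞, 0 < t → t < 1 →
        lam = t • lam₁ + (1 - t) • lam₂ → lam₁ = lam ∧ lam₂ = lam) ↔
      Ergodic (Prod.map S T) lam := by
  obtain rfl : Jmin = optimalJoinings S T ν c := by subst hC hJmin; rfl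
  have : IsProbabilityMeasure lam := hlam.1
  rw [← ENNReal.mem_extremePoints_iff hlam,
    (isExtreme_optimalJoinings hS.measurable hν hc.measurable hcstar hbound).extremePoints_eq,
    Ergodic.iff_mem_extremePoints]
  exact and_iff_right hlam

/-- An optimal joining `λ ∈ J_min(S:ν)` is an extreme point of the convex set
`J_min(S:ν)` if and only if it is ergodic for `S × T`. -/
theorem Jmin_extreme_iff_ergodic
    {X Y : Type*}
    [MetricSpace X] [CompactSpace X] [Nonempty X]
    [MeasurableSpace X] [BorelSpace X]
    [TopologicalSpace Y] [PolishSpace Y] [MeasurableSpace Y] [BorelSpace Y]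
    (S : X → X) (hS : Continuous S)
    (T : Y → Y) (hT : Measurable T)
    (ν : Measure Y) [IsProbabilityMeasure ν] (hν : Ergodic T ν)
    (c : X × Y → ℝ) (hc : LowerSemicontinuous c)
    (cstar : Y → ℝ) (hcstar : Integrable cstar ν)
    (hbound : ∀ x y, |c (x, y)| ≤ cstar y)
    (C : ℝ)
    (hC : C = sInf {r : ℝ | ∃ lam : Measure (X × Y), IsProbabilityMeasure lam ∧
        lam.map (Prod.map S T) = lam ∧ lam.map Prod.snd = ν ∧
        ∫ p, c p ∂lam = r})
    (Jmin : Set (Measure (X × Y)))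
    (hJmin : Jmin = {lam : Measure (X × Y) | IsProbabilityMeasure lam ∧
        lam.map (Prod.map S T) = lam ∧ lam.map Prod.snd = ν ∧
        ∫ p, c p ∂lam = C})
    (lam : Measure (X × Y)) (hlam : lam ∈ Jmin) :
    (∀ lam₁ ∈ Jmin, ∀ lam₂ ∈ Jmin, ∀ t : ℝ≥0∞, 0 < t → t < 1 →
        lam = t • lam₁ + (1 - t) • lam₂ → lam₁ = lam ∧ lam₂ = lam) ↔
      Ergodic (Prod.map S T) lam :=
  Jmin_extreme_iff_ergodic_general S hS T ν hν c hc cstar hcstar hbound C hC Jmin hJmin lam hlam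
end

section
/- Let λ ∈ J_min(S:ν) (an optimal joining) with ergodic decomposition λ = ∫ η dξ(η). Then ξ-almost every η is ergodic and belongs to J_min(S:ν), i.e., satisfies ∫ c dη = C(S:ν). -/
/-!
Pushed forward to `Y`, the decomposition `λ = ∫ η dξ(η)` writes the ergodic measure `ν` as a
mixture of the `T`-invariant marginals of the components. An ergodic measure is extreme among
invariant probability measures, so almost every marginal is `ν` and almost every component is a
joining, of cost at least `C`. As these costs average to the cost `C` of `λ`, almost all of them
equal `C`.
-/

open MeasureTheory

theorem Set.Countable.generatePiSystem {α : Type*} {S : Set (Set α)} (hS : S.Countable) :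
    (generatePiSystem S).Countable := by
  refine ((countable_ofPred_finite_subset hS).image fun t => ⋂₀ t).mono fun u hu => ?_
  induction hu with
  | base h => exact ⟨{_}, ⟨finite_singleton _, singleton_subset_iff.2 h⟩, sInter_singleton _⟩
  | inter _ _ _ ih₁ ih₂ =>
    obtain ⟨t₁, ⟨ht₁, hS₁⟩, rfl⟩ := ih₁
    obtain ⟨t₂, ⟨ht₂, hS₂⟩, rfl⟩ := ih₂
    exact ⟨t₁ ∪ t₂, ⟨ht₁.union ht₂, union_subset hS₁ hS₂⟩, sInter_union t₁ t₂⟩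

namespace MeasureTheory

open Set

variable {α β : Type*} [MeasurableSpace α] [MeasurableSpace β]

theorem Measure.ae_eq_of_forall_ae_apply_eq [MeasurableSpace.CountablyGenerated α]
    {ν : Measure α} [IsFiniteMeasure ν] {ζ : Measure β} {κ : β → Measure α}
    (h : ∀ s, MeasurableSet s → ∀ᵐ b ∂ζ, κ b s = ν s) : ∀ᵐ b ∂ζ, κ b = ν := by
  set K := generatePiSystem (MeasurableSpace.countableGeneratingSet α)
  have hK : (inferInstance : MeasurableSpace α) = MeasurableSpace.generateFrom K := by
    rw [generateFrom_generatePiSystem_eq, MeasurableSpace.generateFrom_countableGeneratingSet]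
  have hK_meas : ∀ s ∈ K, MeasurableSet s :=
    generatePiSystem_measurableSet fun _ => MeasurableSpace.measurableSet_countableGeneratingSet
  have hK_ae : ∀ᵐ b ∂ζ, ∀ s ∈ K, κ b s = ν s :=
    (ae_ball_iff MeasurableSpace.countable_countableGeneratingSet.generatePiSystem).2
      fun s hs => h s (hK_meas s hs)
  filter_upwards [hK_ae, h univ MeasurableSet.univ] with b hb huniv
  exact (ext_of_generate_finite K hK (isPiSystem_generatePiSystem _)
    (fun s hs => (hb s hs).symm) huniv.symm).symm

namespace Measure

variable {m : Measure (Measure α)} {f : α → ℝ}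

theorem ae_integrable_of_integrable_join (hf : Measurable f) (hfi : Integrable f m.join) :
    ∀ᵐ μ ∂m, Integrable f μ := by
  have h : ∫⁻ μ, ∫⁻ x, ‖f x‖ₑ ∂μ ∂m ≠ ⊤ := by
    rw [← lintegral_join hf.enorm.aemeasurable]
    exact hfi.2.ne
  filter_upwards [ae_lt_top (measurable_lintegral hf.enorm) h] with μ hμ
  exact ⟨hf.aestronglyMeasurable, hμ⟩

theorem integral_ae_eq_toReal_sub_of_integrable_join (hf : Measurable f)
    (hfi : Integrable f m.join) :
    (fun μ => ∫ x, f x ∂μ) =ᵐ[m] fun μ =>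
      (∫⁻ x, ENNReal.ofReal (f x) ∂μ).toReal - (∫⁻ x, ENNReal.ofReal (-f x) ∂μ).toReal := by
  filter_upwards [ae_integrable_of_integrable_join hf hfi] with μ hμ
  exact integral_eq_lintegral_pos_part_sub_lintegral_neg_part hμ

theorem lintegral_lintegral_ofReal_ne_top_of_integrable_join (hf : Measurable f)
    (hfi : Integrable f m.join) : ∫⁻ μ, ∫⁻ x, ENNReal.ofReal (f x) ∂μ ∂m ≠ ⊤ := by
  rw [← lintegral_join hf.ennreal_ofReal.aemeasurable]
  exact hfi.lintegral_lt_top.ne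

theorem integrable_toReal_lintegral_ofReal_of_integrable_join (hf : Measurable f)
    (hfi : Integrable f m.join) :
    Integrable (fun μ => (∫⁻ x, ENNReal.ofReal (f x) ∂μ).toReal) m :=
  integrable_toReal_of_lintegral_ne_top (measurable_lintegral hf.ennreal_ofReal).aemeasurable
    (lintegral_lintegral_ofReal_ne_top_of_integrable_join hf hfi)

theorem integrable_integral_of_integrable_join (hf : Measurable f) (hfi : Integrable f m.join) :
    Integrable (fun μ => ∫ x, f x ∂μ) m :=
  ((integrable_toReal_lintegral_ofReal_of_integrable_join hf hfi).sub
    (integrable_toReal_lintegral_ofReal_of_integrable_join hf.neg hfi.neg)).congr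
    (integral_ae_eq_toReal_sub_of_integrable_join hf hfi).symm

theorem integral_join (hf : Measurable f) (hfi : Integrable f m.join) :
    ∫ x, f x ∂m.join = ∫ μ, ∫ x, f x ∂μ ∂m := by
  have toReal_integral {g : α → ℝ} (hg : Measurable g) (hgi : Integrable g m.join) :
      ∫ μ, (∫⁻ x, ENNReal.ofReal (g x) ∂μ).toReal ∂m =
        (∫⁻ x, ENNReal.ofReal (g x) ∂m.join).toReal := by
    rw [lintegral_join hg.ennreal_ofReal.aemeasurable]
    exact integral_toReal (measurable_lintegral hg.ennreal_ofReal).aemeasurable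
      (ae_lt_top (measurable_lintegral hg.ennreal_ofReal)
        (lintegral_lintegral_ofReal_ne_top_of_integrable_join hg hgi))
  rw [integral_congr_ae (integral_ae_eq_toReal_sub_of_integrable_join hf hfi),
    integral_sub (integrable_toReal_lintegral_ofReal_of_integrable_join hf hfi)
      (integrable_toReal_lintegral_ofReal_of_integrable_join (f := fun x => -f x) hf.neg hfi.neg),
    toReal_integral hf hfi, toReal_integral (g := fun x => -f x) hf.neg hfi.neg,
    integral_eq_lintegral_pos_part_sub_lintegral_neg_part hfi]

end Measure

section Joining

variable {X Y : Type*} [MeasurableSpace X] [MeasurableSpace Y] {c : X × Y → ℝ} {cstar : Y → ℝ}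
  {ν : Measure Y} {η : Measure (X × Y)}

theorem measurePreserving_map_snd_of_map_prodMap_eq {S : X → X} {T : Y → Y} (hS : Measurable S)
    (hT : Measurable T) (hη : η.map (Prod.map S T) = η) :
    MeasurePreserving T (η.map Prod.snd) (η.map Prod.snd) := by
  refine ⟨hT, ?_⟩
  rw [Measure.map_map hT measurable_snd]
  change η.map (Prod.snd ∘ Prod.map S T) = _
  rw [← Measure.map_map measurable_snd (hS.prodMap hT), hη]

theorem integrable_comp_snd_of_map_snd_eq (hcstar : Integrable cstar ν)
    (hη : η.map Prod.snd = ν) : Integrable (fun p => cstar p.2) η :=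
  (hη ▸ hcstar : Integrable cstar (η.map Prod.snd)).comp_measurable measurable_snd

theorem integrable_of_abs_le_of_map_snd_eq (hc : AEStronglyMeasurable c η)
    (hcstar : Integrable cstar ν) (hbound : ∀ x y, |c (x, y)| ≤ cstar y)
    (hη : η.map Prod.snd = ν) : Integrable c η :=
  (integrable_comp_snd_of_map_snd_eq hcstar hη).mono' hc (ae_of_all _ fun p => hbound p.1 p.2)

theorem abs_integral_le_of_map_snd_eq (hcstar : Integrable cstar ν)
    (hbound : ∀ x y, |c (x, y)| ≤ cstar y) (hη : η.map Prod.snd = ν) :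
    |∫ p, c p ∂η| ≤ ∫ y, cstar y ∂ν :=
  calc |∫ p, c p ∂η| ≤ ∫ p, cstar p.2 ∂η := by
        rw [← Real.norm_eq_abs]
        exact norm_integral_le_of_norm_le (integrable_comp_snd_of_map_snd_eq hcstar hη)
            (ae_of_all _ fun p => hbound p.1 p.2)
    _ = ∫ y, cstar y ∂ν := by
        rw [← hη, integral_map measurable_snd.aemeasurable (hη ▸ hcstar.1)]

end Joining

end MeasureTheory

section Ergodic

open Set

variable {α β : Type*} [MeasurableSpace α] [MeasurableSpace β] {T : α → α} {ν : Measure α}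
  {ζ : Measure β} {κ : β → Measure α}

/-- The part of the mixture carried by `F` is an invariant measure dominated by `ν`, hence, by
ergodicity, a multiple of `ν`. -/
theorem Ergodic.setLIntegral_apply_of_bind_eq [IsProbabilityMeasure ν] (hν : Ergodic T ν)
    (hκ : Measurable κ)
    (hκ_inv : ∀ᵐ b ∂ζ, IsProbabilityMeasure (κ b) ∧ MeasurePreserving T (κ b) (κ b))
    (hbind : ζ.bind κ = ν) (F : Set β) {s : Set α} (hs : MeasurableSet s) :
    ∫⁻ b in F, κ b s ∂ζ = ζ F * ν s := by
  set m := (ζ.restrict F).bind κ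
  have hm_apply : ∀ t, MeasurableSet t → m t = ∫⁻ b in F, κ b t ∂ζ := fun t ht =>
    Measure.bind_apply ht hκ.aemeasurable
  have hm_le : m ≤ ν := Measure.le_iff.2 fun t ht => by
    rw [hm_apply t ht, ← hbind, Measure.bind_apply ht hκ.aemeasurable]
    exact setLIntegral_le_lintegral F _
  have : IsFiniteMeasure m := isFiniteMeasure_of_le ν hm_le
  have hκ_invF := ae_restrict_of_ae (s := F) hκ_inv
  have hm_inv : MeasurePreserving T m m := by
    refine ⟨hν.measurable, Measure.ext fun t ht => ?_⟩
    rw [Measure.map_apply hν.measurable ht, hm_apply _ (hν.measurable ht), hm_apply t ht]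
    refine lintegral_congr_ae ?_
    filter_upwards [hκ_invF] with b hb
    exact hb.2.measure_preimage ht.nullMeasurableSet
  obtain ⟨c, hc⟩ :=
    hν.eq_smul_of_absolutelyContinuous hm_inv (Measure.absolutelyContinuous_of_le hm_le)
  have hc_eq : c = ζ F := by
    have h := hm_apply univ MeasurableSet.univ
    rw [hc, Measure.smul_apply, measure_univ, smul_eq_mul, mul_one] at h
    rw [h, ← setLIntegral_one]
    refine lintegral_congr_ae ?_
    filter_upwards [hκ_invF] with b hb
    exact hb.1.measure_univ
  rw [← hm_apply s hs, hc, hc_eq, Measure.smul_apply, smul_eq_mul]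

theorem Ergodic.ae_eq_of_bind_eq [MeasurableSpace.CountablyGenerated α] [IsProbabilityMeasure ν]
    [SigmaFinite ζ] (hν : Ergodic T ν) (hκ : Measurable κ)
    (hκ_inv : ∀ᵐ b ∂ζ, IsProbabilityMeasure (κ b) ∧ MeasurePreserving T (κ b) (κ b))
    (hbind : ζ.bind κ = ν) : ∀ᵐ b ∂ζ, κ b = ν :=
  Measure.ae_eq_of_forall_ae_apply_eq fun s hs =>
    ae_eq_of_forall_setLIntegral_eq_of_sigmaFinite ((Measure.measurable_coe hs).comp hκ)
      measurable_const fun F _ _ => by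
        rw [setLIntegral_const, mul_comm]
        exact hν.setLIntegral_apply_of_bind_eq hκ hκ_inv hbind F hs

end Ergodic

theorem ergodic_components_of_optimal_joining_general
    {X Y : Type*}
    [MetricSpace X]
    [MeasurableSpace X] [BorelSpace X]
    [TopologicalSpace Y] [PolishSpace Y] [MeasurableSpace Y] [BorelSpace Y]
    (S : X → X) (hS : Continuous S)
    (T : Y → Y)
    (ν : Measure Y) [IsProbabilityMeasure ν] (hν : Ergodic T ν)
    (c : X × Y → ℝ) (hc : LowerSemicontinuous c)
    (cstar : Y → ℝ) (hcstar : Integrable cstar ν)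
    (hbound : ∀ x y, |c (x, y)| ≤ cstar y)
    (C : ℝ)
    (hC : C = sInf {r : ℝ | ∃ lam : Measure (X × Y), IsProbabilityMeasure lam ∧
        lam.map (Prod.map S T) = lam ∧ lam.map Prod.snd = ν ∧
        ∫ p, c p ∂lam = r})
    (lam : Measure (X × Y))
    (hmarg : lam.map Prod.snd = ν)
    (hopt : ∫ p, c p ∂lam = C)
    (ξ : Measure (Measure (X × Y))) (hξprob : IsProbabilityMeasure ξ)
    (hcomp : ∀ᵐ η ∂ξ, IsProbabilityMeasure η ∧ η.map (Prod.map S T) = η)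
    (herg : ∀ᵐ η ∂ξ, Ergodic (Prod.map S T) η)
    (hdecomp : lam = ξ.join) :
    ∀ᵐ η ∂ξ, Ergodic (Prod.map S T) η ∧ η.map Prod.snd = ν ∧
      ∫ p, c p ∂η = C := by
  have hcm : Measurable c := hc.measurable
  have hmarg_ae : ∀ᵐ η ∂ξ, η.map Prod.snd = ν := by
    refine hν.ae_eq_of_bind_eq (Measure.measurable_map _ measurable_snd) ?_ ?_
    · filter_upwards [hcomp] with η ⟨hη, hη_inv⟩
      exact ⟨Measure.isProbabilityMeasure_map measurable_snd.aemeasurable,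
        measurePreserving_map_snd_of_map_prodMap_eq hS.measurable hν.measurable hη_inv⟩
    · rw [Measure.bind, Measure.join_map_map measurable_snd, ← hdecomp, hmarg]
  have hC_le : ∀ᵐ η ∂ξ, C ≤ ∫ p, c p ∂η := by
    have hbdd : BddBelow {r : ℝ | ∃ lam : Measure (X × Y), IsProbabilityMeasure lam ∧
        lam.map (Prod.map S T) = lam ∧ lam.map Prod.snd = ν ∧ ∫ p, c p ∂lam = r} := by
      refine ⟨-∫ y, cstar y ∂ν, ?_⟩
      rintro r ⟨η, -, -, hη, rfl⟩
      exact neg_le_of_abs_le (abs_integral_le_of_map_snd_eq hcstar hbound hη)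
    filter_upwards [hcomp, hmarg_ae] with η ⟨hη, hη_inv⟩ hη_marg
    exact hC ▸ csInf_le hbdd ⟨η, hη, hη_inv, hη_marg, rfl⟩
  have hint : Integrable c ξ.join :=
    hdecomp ▸ integrable_of_abs_le_of_map_snd_eq hcm.aestronglyMeasurable hcstar hbound hmarg
  have hmean : ∫ _, C ∂ξ = ∫ η, ∫ p, c p ∂η ∂ξ := by
    rw [← Measure.integral_join hcm hint, ← hdecomp, hopt, integral_const, probReal_univ, one_smul]
  have hcost : ∀ᵐ η ∂ξ, C = ∫ p, c p ∂η :=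
    (integral_eq_iff_of_ae_le (integrable_const C)
      (Measure.integrable_integral_of_integrable_join hcm hint) hC_le).1 hmean
  filter_upwards [herg, hmarg_ae, hcost] with η hη_erg hη_marg hη_cost
  exact ⟨hη_erg, hη_marg, hη_cost.symm⟩

/-- If an optimal joining `λ ∈ J_min(S:ν)` has ergodic decomposition
`λ = ∫ η dξ(η)`, then ξ-almost every component `η` is ergodic and is itself an
optimal joining: `η ∈ J(S:ν)` and `∫ c dη = C(S:ν)`. -/
theorem ergodic_components_of_optimal_joining
    {X Y : Type*}
    [MetricSpace X] [CompactSpace X] [Nonempty X]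
    [MeasurableSpace X] [BorelSpace X]
    [TopologicalSpace Y] [PolishSpace Y] [MeasurableSpace Y] [BorelSpace Y]
    (S : X → X) (hS : Continuous S)
    (T : Y → Y) (hT : Measurable T)
    (ν : Measure Y) [IsProbabilityMeasure ν] (hν : Ergodic T ν)
    (c : X × Y → ℝ) (hc : LowerSemicontinuous c)
    (cstar : Y → ℝ) (hcstar : Integrable cstar ν)
    (hbound : ∀ x y, |c (x, y)| ≤ cstar y)
    (C : ℝ)
    (hC : C = sInf {r : ℝ | ∃ lam : Measure (X × Y), IsProbabilityMeasure lam ∧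
        lam.map (Prod.map S T) = lam ∧ lam.map Prod.snd = ν ∧
        ∫ p, c p ∂lam = r})
    (lam : Measure (X × Y)) (hprob : IsProbabilityMeasure lam)
    (hinv : lam.map (Prod.map S T) = lam) (hmarg : lam.map Prod.snd = ν)
    (hopt : ∫ p, c p ∂lam = C)
    (ξ : Measure (Measure (X × Y))) (hξprob : IsProbabilityMeasure ξ)
    (hcomp : ∀ᵐ η ∂ξ, IsProbabilityMeasure η ∧ η.map (Prod.map S T) = η)
    (herg : ∀ᵐ η ∂ξ, Ergodic (Prod.map S T) η)
    (hdecomp : lam = ξ.join) :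
    ∀ᵐ η ∂ξ, Ergodic (Prod.map S T) η ∧ η.map Prod.snd = ν ∧
      ∫ p, c p ∂η = C :=
  ergodic_components_of_optimal_joining_general S hS T ν hν c hc cstar hcstar hbound C hC lam hmarg
    hopt ξ hξprob hcomp herg hdecomp
end

section
/- Let ν be a shift-invariant Borel probability measure on {0,1}^ℕ and let L_θ ⊆ {0,1}^ℕ be a closed shift-invariant set. Define d̄(θ:ν) = inf_μ d̄(μ,ν) over all shift-invariant probability measures μ with μ(L_θ) = 1, where d̄(μ,ν) is the minimal value of λ({(a,b) : a_0 ≠ b_0}) over joinings λ of μ and ν (shift × shift invariant couplings). Then d̄(θ:ν) = 0 if and only if ν(L_θ) = 1. -/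
/-! If `d̄(θ:ν) = 0`, there are joinings `λ` of some `μ` carried by `L` with `ν` whose
disagreement probability at coordinate `0` is arbitrarily small; by shift invariance of `λ`
the same bound holds at every coordinate, so the `ν`-mass of sequences whose length-`n`
prefix does not extend to a point of `L` is at most `n` times that bound, hence zero.
Since `L` is closed, every point outside `L` has such a prefix, so `ν(Lᶜ) = 0`.
Conversely, if `ν(L) = 1` then `ν` itself competes, via the diagonal joining. -/

open MeasureTheory Filter Topology
open scoped ENNReal

/-- The left shift on binary sequences. -/
def binShift (a : ℕ → Bool) (i : ℕ) : Bool := a (i + 1)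

/-- Ornstein's d-bar distance between two shift-invariant measures on
`{0,1}^ℕ`: the minimal probability of disagreement in the first coordinate
over shift-invariant joinings. -/
noncomputable def dbar (μ ν : Measure (ℕ → Bool)) : ℝ≥0∞ :=
  ⨅ (lam : Measure ((ℕ → Bool) × (ℕ → Bool)))
    (_ : IsProbabilityMeasure lam ∧
      lam.map (Prod.map binShift binShift) = lam ∧
      lam.map Prod.fst = μ ∧ lam.map Prod.snd = ν),
    lam {p | p.1 0 ≠ p.2 0}

/-- `d̄(θ:ν)`: the minimal d-bar distance from `ν` to shift-invariant
measures supported on `L`. -/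
noncomputable def dbarTo (L : Set (ℕ → Bool)) (ν : Measure (ℕ → Bool)) : ℝ≥0∞ :=
  ⨅ (μ : Measure (ℕ → Bool))
    (_ : IsProbabilityMeasure μ ∧ μ.map binShift = μ ∧ μ L = 1),
    dbar μ ν

def disagreeAt (i : ℕ) : Set ((ℕ → Bool) × (ℕ → Bool)) := {p | p.1 i ≠ p.2 i}

def badPrefix (L : Set (ℕ → Bool)) (n : ℕ) : Set (ℕ → Bool) :=
  {b | ∀ a : ℕ → Bool, (∀ i < n, a i = b i) → a ∉ L}

lemma measurable_binShift : Measurable binShift :=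
  measurable_pi_lambda _ fun i => measurable_pi_apply (i + 1)

lemma measurable_prodMap_binShift : Measurable (Prod.map binShift binShift) :=
  measurable_binShift.prodMap measurable_binShift

lemma binShift_iterate_apply (k : ℕ) (a : ℕ → Bool) (i : ℕ) :
    binShift^[k] a i = a (i + k) := by
  induction k generalizing a i with
  | zero => rfl
  | succ k ih => rw [Function.iterate_succ_apply, ih]; rfl

lemma measurableSet_disagreeAt (i : ℕ) : MeasurableSet (disagreeAt i) :=
  (measurableSet_eq_fun ((measurable_pi_apply i).comp measurable_fst)
    ((measurable_pi_apply i).comp measurable_snd)).compl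

lemma preimage_iterate_disagreeAt_zero (k : ℕ) :
    (Prod.map binShift binShift)^[k] ⁻¹' disagreeAt 0 = disagreeAt k := by
  ext p
  simp [disagreeAt, Prod.map_iterate, binShift_iterate_apply]

lemma measure_disagreeAt_eq_of_map_eq {lam : Measure ((ℕ → Bool) × (ℕ → Bool))}
    (hlam : lam.map (Prod.map binShift binShift) = lam) (k : ℕ) :
    lam (disagreeAt k) = lam (disagreeAt 0) := by
  have hpres : MeasurePreserving (Prod.map binShift binShift) lam lam :=
    ⟨measurable_prodMap_binShift, hlam⟩
  rw [← preimage_iterate_disagreeAt_zero k,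
    (hpres.iterate k).measure_preimage (measurableSet_disagreeAt 0).nullMeasurableSet]

lemma measurableSet_badPrefix (L : Set (ℕ → Bool)) (n : ℕ) :
    MeasurableSet (badPrefix L n) := by
  let r : (ℕ → Bool) → (Fin n → Bool) := fun b i => b i
  have hr : Measurable r := measurable_pi_lambda _ fun i => measurable_pi_apply _
  have hpre : badPrefix L n = r ⁻¹' (r '' badPrefix L n) := by
    refine (Set.subset_preimage_image r _).antisymm ?_
    rintro b ⟨b', hb', hrb⟩ a ha
    exact hb' a fun i hi => (ha i hi).trans (congrFun hrb ⟨i, hi⟩).symm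
  rw [hpre]
  exact hr (Set.toFinite _).measurableSet

lemma compl_subset_iUnion_badPrefix {L : Set (ℕ → Bool)} (hL : IsClosed L) :
    Lᶜ ⊆ ⋃ n, badPrefix L n := by
  intro b hb
  obtain ⟨I, u, hu, hsub⟩ := isOpen_pi_iff.mp hL.isOpen_compl b hb
  refine Set.mem_iUnion.2 ⟨I.sup id + 1, fun a ha => hsub fun i hi => ?_⟩
  rw [ha i (Nat.lt_succ_of_le (Finset.le_sup (f := id) hi))]
  exact (hu i hi).2

lemma snd_preimage_badPrefix_subset (L : Set (ℕ → Bool)) (n : ℕ) :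
    Prod.snd ⁻¹' badPrefix L n ⊆ Prod.fst ⁻¹' Lᶜ ∪ ⋃ i ∈ Finset.range n, disagreeAt i := by
  intro p hp
  by_contra hcon
  rw [Set.mem_union, not_or, Set.mem_preimage, Set.notMem_compl_iff, Set.mem_iUnion₂] at hcon
  exact hp p.1 (fun i hi => not_not.1 fun hne => hcon.2 ⟨i, Finset.mem_range.2 hi, hne⟩) hcon.1

lemma measure_badPrefix_le_of_joining {L : Set (ℕ → Bool)} (hL : MeasurableSet L)
    {μ ν : Measure (ℕ → Bool)} [IsProbabilityMeasure μ] (hμL : μ L = 1)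
    {lam : Measure ((ℕ → Bool) × (ℕ → Bool))}
    (hlam : lam.map (Prod.map binShift binShift) = lam)
    (hfst : lam.map Prod.fst = μ) (hsnd : lam.map Prod.snd = ν) (n : ℕ) :
    ν (badPrefix L n) ≤ n * lam (disagreeAt 0) := by
  have hfst_null : lam (Prod.fst ⁻¹' Lᶜ) = 0 := by
    rw [← Measure.map_apply measurable_fst hL.compl, hfst, prob_compl_eq_zero_iff hL]
    exact hμL
  calc ν (badPrefix L n) = lam (Prod.snd ⁻¹' badPrefix L n) := by
        rw [← hsnd, Measure.map_apply measurable_snd (measurableSet_badPrefix L n)]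
    _ ≤ lam (Prod.fst ⁻¹' Lᶜ) + lam (⋃ i ∈ Finset.range n, disagreeAt i) :=
        (measure_mono (snd_preimage_badPrefix_subset L n)).trans (measure_union_le _ _)
    _ ≤ ∑ i ∈ Finset.range n, lam (disagreeAt i) := by
        rw [hfst_null, zero_add]
        exact measure_biUnion_finset_le _ _
    _ = n * lam (disagreeAt 0) := by
        simp [measure_disagreeAt_eq_of_map_eq hlam]

lemma measure_badPrefix_div_le_dbarTo {L : Set (ℕ → Bool)} (hL : MeasurableSet L)
    (ν : Measure (ℕ → Bool)) (n : ℕ) :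
    ν (badPrefix L n) / n ≤ dbarTo L ν :=
  le_iInf₂ fun _μ ⟨_, _, hμL⟩ => le_iInf₂ fun _lam ⟨_, hlam, hfst, hsnd⟩ =>
    ENNReal.div_le_of_le_mul' (measure_badPrefix_le_of_joining hL hμL hlam hfst hsnd n)

lemma dbar_self_eq_zero {ν : Measure (ℕ → Bool)} [IsProbabilityMeasure ν]
    (hν : ν.map binShift = ν) : dbar ν ν = 0 := by
  have hdiag : Measurable fun a : ℕ → Bool => (a, a) := measurable_id.prodMk measurable_id
  have hinv : (ν.map fun a => (a, a)).map (Prod.map binShift binShift) = ν.map fun a => (a, a) := by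
    rw [Measure.map_map measurable_prodMap_binShift hdiag,
      show Prod.map binShift binShift ∘ (fun a => (a, a)) = (fun a => (a, a)) ∘ binShift from rfl,
      ← Measure.map_map hdiag measurable_binShift, hν]
  have hmarg : ∀ f : (ℕ → Bool) × (ℕ → Bool) → ℕ → Bool, f ∘ (fun a => (a, a)) = id →
      Measurable f → (ν.map fun a => (a, a)).map f = ν := fun f hf hfm => by
    rw [Measure.map_map hfm hdiag, hf, Measure.map_id]
  refine le_antisymm ((iInf₂_le _ ⟨Measure.isProbabilityMeasure_map hdiag.aemeasurable, hinv,
    hmarg _ rfl measurable_fst, hmarg _ rfl measurable_snd⟩).trans_eq ?_) zero_le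
  change (ν.map fun a => (a, a)) (disagreeAt 0) = 0
  rw [Measure.map_apply hdiag (measurableSet_disagreeAt 0)]
  simp [disagreeAt]

theorem dbarTo_eq_zero_iff_general
    (ν : Measure (ℕ → Bool)) [IsProbabilityMeasure ν]
    (hν : ν.map binShift = ν)
    (L : Set (ℕ → Bool)) (hLclosed : IsClosed L) :
    dbarTo L ν = 0 ↔ ν L = 1 := by
  have hL := hLclosed.measurableSet
  refine ⟨fun h => ?_, fun hνL => ?_⟩
  · have hbad : ∀ n, ν (badPrefix L n) = 0 := fun n => by
      have := measure_badPrefix_div_le_dbarTo hL ν n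
      rw [h, nonpos_iff_eq_zero, ENNReal.div_eq_zero_iff] at this
      exact this.resolve_right (ENNReal.natCast_ne_top n)
    rw [← prob_compl_eq_zero_iff hL]
    exact measure_mono_null (compl_subset_iUnion_badPrefix hLclosed) (measure_iUnion_null hbad)
  · exact le_antisymm ((iInf₂_le ν ⟨inferInstance, hν, hνL⟩).trans_eq (dbar_self_eq_zero hν))
      zero_le

/-- `d̄(θ:ν) = 0` if and only if `ν(L_θ) = 1`. -/
theorem dbarTo_eq_zero_iff
    (ν : Measure (ℕ → Bool)) [IsProbabilityMeasure ν]
    (hν : ν.map binShift = ν)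
    (L : Set (ℕ → Bool)) (hLclosed : IsClosed L)
    (hLinv : Set.MapsTo binShift L L) :
    dbarTo L ν = 0 ↔ ν L = 1 :=
  dbarTo_eq_zero_iff_general ν hν L hLclosed
end

section
/- Let R_α(x) = x + α mod 1 on [0,1), Θ = [0,1/2], and π : [0,1) → {0,1} with π(u) = 0 if u ∈ [0,1/2) and π(u) = 1 if u ∈ [1/2,1). Then for any α₁ < α₂ in Θ and any 0 < ε < (α₂ − α₁)/2, setting O = [α₂ − ε, α₂ + ε] ∩ Θ and N ≥ 3/(2(α₂ − α₁ − ε)): for all u, v ∈ [0,1) and all α ∈ O, there exists k ∈ [0, N] with π(R_α^k u) ≠ π(R_{α₁}^k v). -/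
open Set

/-!
Lift both orbits to `ℝ`: the labels of `R_α^k u` and `R_β^k v` are the parities of
`a k = ⌊2 (u + k α)⌋` and `b k = ⌊2 (v + k β)⌋`. As `2α, 2β ∈ [0, 1]`, each of these integer
sequences grows by `0` or `1` per step, so if the labels agreed up to time `N`, the difference
`a k - b k` would stay even and could never change. But the real difference
`2 (u - v) + 2 k (α - β)` has grown by at least `2` at time `N`, forcing `a N - b N > a 0 - b 0`.
-/

/-- Rotation by `α` on the circle `[0,1)` (addition mod 1). -/
noncomputable def rot (α : ℝ) (x : ℝ) : ℝ := Int.fract (x + α)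

/-- The binary label of a point of `[0,1)` for the partition
`{[0,1/2), [1/2,1)}`. -/
noncomputable def lab (x : ℝ) : Bool := decide ((1 : ℝ) / 2 ≤ x)

theorem iterate_rot_apply {u : ℝ} (hu : u ∈ Ico (0 : ℝ) 1) (α : ℝ) (k : ℕ) :
    (rot α)^[k] u = Int.fract (u + k * α) := by
  induction k with
  | zero => simpa using (Int.fract_eq_self.2 hu).symm
  | succ k ih =>
    rw [Function.iterate_succ_apply', ih, rot, ← Int.self_sub_floor (u + k * α),
      sub_add_eq_add_sub, Int.fract_sub_intCast]
    push_cast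
    ring_nf

theorem lab_fract (x : ℝ) : lab (Int.fract x) = decide (Odd ⌊2 * x⌋) := by
  have hsplit : ⌊2 * x⌋ = ⌊2 * Int.fract x⌋ + 2 * ⌊x⌋ := by
    rw [← Int.floor_add_intCast, ← Int.self_sub_floor]
    push_cast
    ring_nf
  rw [lab, hsplit]
  rcases lt_or_ge (Int.fract x) (1 / 2) with hlt | hge
  · have : ⌊2 * Int.fract x⌋ = 0 :=
      Int.floor_eq_iff.2 ⟨by push_cast; linarith [Int.fract_nonneg x], by push_cast; linarith⟩
    rw [this, zero_add, decide_eq_decide]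
    exact iff_of_false hlt.not_ge (Int.not_odd_iff_even.2 (even_two_mul _))
  · have : ⌊2 * Int.fract x⌋ = 1 :=
      Int.floor_eq_iff.2 ⟨by push_cast; linarith, by push_cast; linarith [Int.fract_lt_one x]⟩
    rw [this, decide_eq_decide]
    exact iff_of_true hge ⟨⌊x⌋, by ring⟩

theorem floor_le_floor_add_and_le {x δ : ℝ} (h0 : 0 ≤ δ) (h1 : δ ≤ 1) :
    ⌊x⌋ ≤ ⌊x + δ⌋ ∧ ⌊x + δ⌋ ≤ ⌊x⌋ + 1 :=
  ⟨Int.floor_le_floor (by linarith), by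
    rw [← Int.floor_add_one]; exact Int.floor_le_floor (by linarith)⟩

theorem floor_two_mul_add_succ_mul_le {w γ : ℝ} (hγ : γ ∈ Icc (0 : ℝ) (1 / 2)) (k : ℕ) :
    ⌊2 * (w + k * γ)⌋ ≤ ⌊2 * (w + (k + 1 : ℕ) * γ)⌋ ∧
      ⌊2 * (w + (k + 1 : ℕ) * γ)⌋ ≤ ⌊2 * (w + k * γ)⌋ + 1 := by
  have h := floor_le_floor_add_and_le (x := 2 * (w + k * γ)) (by linarith [hγ.1])
    (by linarith [hγ.2] : 2 * γ ≤ 1)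
  rwa [show 2 * (w + k * γ) + 2 * γ = 2 * (w + (k + 1 : ℕ) * γ) by push_cast; ring] at h

theorem floor_sub_floor_lt_floor_sub_floor {x y x' y' : ℝ} (h : x' - y' + 2 ≤ x - y) :
    ⌊x'⌋ - ⌊y'⌋ < ⌊x⌋ - ⌊y⌋ := by
  have : ((⌊x'⌋ - ⌊y'⌋ : ℤ) : ℝ) < ⌊x⌋ - ⌊y⌋ := by
    push_cast
    linarith [Int.floor_le x', Int.lt_floor_add_one y', Int.lt_floor_add_one x, Int.floor_le y]
  exact_mod_cast this

theorem sub_eq_sub_of_even_of_steps_le_one {a b : ℕ → ℤ} {N : ℕ}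
    (ha : ∀ k < N, a k ≤ a (k + 1) ∧ a (k + 1) ≤ a k + 1)
    (hb : ∀ k < N, b k ≤ b (k + 1) ∧ b (k + 1) ≤ b k + 1)
    (heven : ∀ k ≤ N, Even (a k - b k)) : a N - b N = a 0 - b 0 := by
  suffices ∀ k ≤ N, a k - b k = a 0 - b 0 from this N le_rfl
  intro k hk
  induction k with
  | zero => rfl
  | succ k ih =>
    obtain ⟨r, hr⟩ := heven k (by omega)
    obtain ⟨s, hs⟩ := heven (k + 1) hk
    have := ha k hk
    have := hb k hk
    have := ih (by omega)
    omega

theorem exists_lab_iterate_rot_ne {α β u v : ℝ} (hα : α ∈ Icc (0 : ℝ) (1 / 2))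
    (hβ : β ∈ Icc (0 : ℝ) (1 / 2)) (hu : u ∈ Ico (0 : ℝ) 1) (hv : v ∈ Ico (0 : ℝ) 1) {N : ℕ}
    (hN : 1 ≤ N * (α - β)) : ∃ k ≤ N, lab ((rot α)^[k] u) ≠ lab ((rot β)^[k] v) := by
  by_contra! hlab
  set a : ℕ → ℤ := fun k ↦ ⌊2 * (u + k * α)⌋
  set b : ℕ → ℤ := fun k ↦ ⌊2 * (v + k * β)⌋
  have hconst : a N - b N = a 0 - b 0 := by
    refine sub_eq_sub_of_even_of_steps_le_one (fun k _ ↦ floor_two_mul_add_succ_mul_le hα k)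
      (fun k _ ↦ floor_two_mul_add_succ_mul_le hβ k) fun k hk ↦ ?_
    have h := hlab k hk
    rw [iterate_rot_apply hu, iterate_rot_apply hv, lab_fract, lab_fract,
      decide_eq_decide] at h
    exact Int.even_sub'.2 h
  refine (floor_sub_floor_lt_floor_sub_floor ?_).ne' hconst
  push_cast
  linarith

theorem rotations_distinguished_general
    (α₁ α₂ : ℝ) (hα₁ : α₁ ∈ Icc (0 : ℝ) (1 / 2))
    (ε : ℝ) (hε0 : 0 < ε) (hε : ε < (α₂ - α₁) / 2)
    (N : ℕ) (hN : (N : ℝ) ≥ 3 / (2 * (α₂ - α₁ - ε))) :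
    ∀ u ∈ Ico (0 : ℝ) 1, ∀ v ∈ Ico (0 : ℝ) 1,
      ∀ α ∈ Icc (α₂ - ε) (α₂ + ε) ∩ Icc (0 : ℝ) (1 / 2),
        ∃ k : ℕ, k ≤ N ∧ lab ((rot α)^[k] u) ≠ lab ((rot α₁)^[k] v) := by
  intro u hu v hv α ⟨hαO, hα⟩
  refine exists_lab_iterate_rot_ne hα hα₁ hu hv ?_
  have hgap : 0 < α₂ - α₁ - ε := by linarith
  have hNgap : 3 ≤ N * (2 * (α₂ - α₁ - ε)) := (div_le_iff₀ (by positivity)).1 hN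
  calc (1 : ℝ) ≤ N * (α₂ - α₁ - ε) := by linarith
    _ ≤ N * (α - α₁) := mul_le_mul_of_nonneg_left (by linarith [hαO.1]) N.cast_nonneg

/-- Label sequences distinguish distinct rotation angles, uniformly over
initial points: if `α₁ < α₂` in `[0,1/2]`, `0 < ε < (α₂ − α₁)/2`,
`O = [α₂ − ε, α₂ + ε] ∩ [0,1/2]` and `N ≥ 3/(2(α₂ − α₁ − ε))`, then for all
`u, v ∈ [0,1)` and all `α ∈ O` some `k ≤ N` gives differing labels. -/
theorem rotations_distinguished
    (α₁ α₂ : ℝ) (hα₁ : α₁ ∈ Icc (0 : ℝ) (1 / 2))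
    (hα₂ : α₂ ∈ Icc (0 : ℝ) (1 / 2)) (hlt : α₁ < α₂)
    (ε : ℝ) (hε0 : 0 < ε) (hε : ε < (α₂ - α₁) / 2)
    (N : ℕ) (hN : (N : ℝ) ≥ 3 / (2 * (α₂ - α₁ - ε))) :
    ∀ u ∈ Ico (0 : ℝ) 1, ∀ v ∈ Ico (0 : ℝ) 1,
      ∀ α ∈ Icc (α₂ - ε) (α₂ + ε) ∩ Icc (0 : ℝ) (1 / 2),
        ∃ k : ℕ, k ≤ N ∧ lab ((rot α)^[k] u) ≠ lab ((rot α₁)^[k] v) :=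
  rotations_distinguished_general α₁ α₂ hα₁ ε hε0 hε N hN
end
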